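/- arXiv:2308.12407 — 5 statements merged into one kernel-verified Lean document; each statement's English description precedes it below -/
import Mathlib

section
/- Let B be the 2×4 complex matrix with rows (c₂ρ, 0, γ₁, 0) and (0, c₁ρ, 0, γ₂), where c₁, c₂, ρ > 0 are real and γ₁, γ₂ ∈ ℂ have negative real parts, and let S₂' be the real symmetric 4×4 matrix with entries S₂'[1,3] = S₂'[3,1] = c₂, S₂'[2,4] = S₂'[4,2] = c₁, and all other entries zero. Then with β₀ := -1/(2ρ Re γ₁) - 1/(2ρ Re γ₂), there exists ε > 0 such that for all nonzero r ∈ ℂ⁴, β₀ ‖B r‖² > ε ‖r‖² - r* S₂' r. -/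
/-!
The form `β₀ ‖B r‖² + Re (r* S₂' r)` splits into two Hermitian forms, in `(r₀, r₂)` and in
`(r₁, r₃)`. The one belonging to `(c, γ)` has leading coefficient `β₀ c² ρ²` and determinant
`-c² (2 β₀ ρ Re γ + 1)`, which is positive since `2 β₀ ρ Re γ₁ + 1 = -Re γ₁ / Re γ₂ < 0` (and
symmetrically for `γ₂`). A positive definite `2 × 2` Hermitian form is bounded below by
`det / trace` times the squared norm.
-/

open Matrix ComplexConjugate

lemma hermitianForm_nonneg {a c : ℝ} {w : ℂ} (ha : 0 < a) (hdet : ‖w‖ ^ 2 ≤ a * c)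
    (x y : ℂ) :
    0 ≤ a * ‖x‖ ^ 2 + 2 * (conj x * w * y).re + c * ‖y‖ ^ 2 := by
  have hsq : a * (a * ‖x‖ ^ 2 + 2 * (conj x * w * y).re + c * ‖y‖ ^ 2)
      = ‖a * x + w * y‖ ^ 2 + (a * c - ‖w‖ ^ 2) * ‖y‖ ^ 2 := by
    simp only [Complex.sq_norm, Complex.normSq_apply, Complex.add_re, Complex.add_im,
      Complex.mul_re, Complex.mul_im, Complex.ofReal_re, Complex.ofReal_im,
      Complex.conj_re, Complex.conj_im]
    ring
  have : 0 ≤ a * (a * ‖x‖ ^ 2 + 2 * (conj x * w * y).re + c * ‖y‖ ^ 2) := by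
    rw [hsq]; exact add_nonneg (sq_nonneg _) (mul_nonneg (sub_nonneg.2 hdet) (sq_nonneg _))
  exact (mul_nonneg_iff_of_pos_left ha).1 this

lemma exists_pos_mul_le_hermitianForm {a c : ℝ} {w : ℂ} (ha : 0 < a)
    (hdet : ‖w‖ ^ 2 < a * c) :
    ∃ l > 0, ∀ x y : ℂ,
      l * (‖x‖ ^ 2 + ‖y‖ ^ 2) ≤ a * ‖x‖ ^ 2 + 2 * (conj x * w * y).re + c * ‖y‖ ^ 2 := by
  have hc : 0 < c := pos_of_mul_pos_right ((sq_nonneg ‖w‖).trans_lt hdet) ha.le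
  set l := (a * c - ‖w‖ ^ 2) / (a + c) with hl
  have hl_pos : 0 < l := div_pos (sub_pos.2 hdet) (by positivity)
  have hl_lt : l < a := by
    rw [hl, div_lt_iff₀ (by positivity)]; nlinarith [sq_nonneg ‖w‖]
  have hdet' : ‖w‖ ^ 2 ≤ (a - l) * (c - l) := by
    have : l * (a + c) = a * c - ‖w‖ ^ 2 := div_mul_cancel₀ _ (by positivity)
    nlinarith [sq_nonneg l]
  refine ⟨l, hl_pos, fun x y => ?_⟩
  have := hermitianForm_nonneg (sub_pos.2 hl_lt) hdet' x y
  linarith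

lemma exists_pos_mul_le_sq_norm_add_re_conj_mul {β a c : ℝ} {γ : ℂ} (hβ : 0 < β)
    (hdet : c * (2 * β * a * γ.re + c) < 0) :
    ∃ l > 0, ∀ x y : ℂ,
      l * (‖x‖ ^ 2 + ‖y‖ ^ 2) ≤ β * ‖a * x + γ * y‖ ^ 2 + 2 * c * (conj x * y).re := by
  have ha : a ≠ 0 := by rintro rfl; nlinarith [sq_nonneg c]
  have hform : ∀ x y : ℂ, β * ‖a * x + γ * y‖ ^ 2 + 2 * c * (conj x * y).re
      = β * a ^ 2 * ‖x‖ ^ 2 + 2 * (conj x * (β * a * γ + c) * y).re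
        + β * ‖γ‖ ^ 2 * ‖y‖ ^ 2 := by
    intro x y
    simp only [Complex.sq_norm, Complex.normSq_apply, Complex.add_re, Complex.add_im,
      Complex.mul_re, Complex.mul_im, Complex.ofReal_re, Complex.ofReal_im,
      Complex.conj_re, Complex.conj_im]
    ring
  have hdet' : ‖(β * a * γ + c : ℂ)‖ ^ 2 < β * a ^ 2 * (β * ‖γ‖ ^ 2) := by
    simp only [Complex.sq_norm, Complex.normSq_apply, Complex.add_re, Complex.add_im,
      Complex.mul_re, Complex.mul_im, Complex.ofReal_re, Complex.ofReal_im]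
    nlinarith
  obtain ⟨l, hl, hle⟩ :=
    exists_pos_mul_le_hermitianForm (by positivity) hdet'
  exact ⟨l, hl, fun x y => (hform x y).symm ▸ hle x y⟩

lemma two_mul_mul_mul_add_one_neg {ρ g₁ g₂ : ℝ} (hρ : 0 < ρ) (h₁ : g₁ < 0)
    (h₂ : g₂ < 0) :
    2 * (-1 / (2 * ρ * g₁) - 1 / (2 * ρ * g₂)) * ρ * g₁ + 1 < 0 := by
  have : 2 * (-1 / (2 * ρ * g₁) - 1 / (2 * ρ * g₂)) * ρ * g₁ + 1 = -(g₁ / g₂) := by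
    field_simp [h₁.ne, h₂.ne]
    ring
  rw [this, neg_neg_iff_pos]
  exact div_pos_of_neg_of_neg h₁ h₂

lemma sum_sq_norm_mulVec_boundary (a b γ₁ γ₂ : ℂ) (r : Fin 4 → ℂ) :
    ∑ i, ‖(!![a, 0, γ₁, 0; 0, b, 0, γ₂] *ᵥ r) i‖ ^ 2
      = ‖a * r 0 + γ₁ * r 2‖ ^ 2 + ‖b * r 1 + γ₂ * r 3‖ ^ 2 := by
  simp [Matrix.mulVec, dotProduct, Fin.sum_univ_four]

lemma re_star_dotProduct_mulVec_S₂' (a b : ℝ) (r : Fin 4 → ℂ) :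
    (star r ⬝ᵥ
        !![0, 0, (a : ℂ), 0; 0, 0, 0, (b : ℂ); (a : ℂ), 0, 0, 0; 0, (b : ℂ), 0, 0] *ᵥ r).re
      = 2 * a * (conj (r 0) * r 2).re + 2 * b * (conj (r 1) * r 3).re := by
  simp only [dotProduct, Pi.star_apply, RCLike.star_def, mulVec, of_apply, cons_val',
    cons_val_fin_one, Fin.sum_univ_four, cons_val_zero, cons_val_one, cons_val, zero_mul,
    add_zero, zero_add, Complex.add_re, Complex.mul_re, Complex.conj_re, Complex.ofReal_re,
    Complex.ofReal_im, Complex.conj_im, Complex.mul_im]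
  ring

theorem stmt_3 (ρ c₁ c₂ : ℝ) (hρ : ρ > 0) (hc : c₁ > c₂) (hc₂ : c₂ > 0)
    (γ₁ γ₂ : ℂ) (h₁ : γ₁.re < 0) (h₂ : γ₂.re < 0)
    (B : Matrix (Fin 2) (Fin 4) ℂ)
    (hB : B = !![(c₂ * ρ : ℂ), 0, γ₁, 0; 0, (c₁ * ρ : ℂ), 0, γ₂])
    (S₂' : Matrix (Fin 4) (Fin 4) ℂ)
    (hS : S₂' = !![0, 0, (c₂ : ℂ), 0; 0, 0, 0, (c₁ : ℂ);
                   (c₂ : ℂ), 0, 0, 0; 0, (c₁ : ℂ), 0, 0])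
    (β₀ : ℝ) (hβ₀ : β₀ = -1 / (2 * ρ * γ₁.re) - 1 / (2 * ρ * γ₂.re)) :
    ∃ ε > 0, ∀ r : Fin 4 → ℂ, r ≠ 0 →
      β₀ * ∑ i, ‖B.mulVec r i‖ ^ 2 >
        ε * ∑ i, ‖r i‖ ^ 2 - (star r ⬝ᵥ S₂'.mulVec r).re := by
  have hkey₁ : 2 * β₀ * ρ * γ₁.re + 1 < 0 := hβ₀ ▸ two_mul_mul_mul_add_one_neg hρ h₁ h₂
  have hkey₂ : 2 * β₀ * ρ * γ₂.re + 1 < 0 := by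
    have : β₀ = -1 / (2 * ρ * γ₂.re) - 1 / (2 * ρ * γ₁.re) := by rw [hβ₀]; ring
    exact this ▸ two_mul_mul_mul_add_one_neg hρ h₂ h₁
  have hβ : 0 < β₀ := by nlinarith [mul_neg_of_pos_of_neg hρ h₁]
  have hdet₁ : c₂ * (2 * β₀ * (c₂ * ρ) * γ₁.re + c₂) < 0 := by
    nlinarith [mul_pos hc₂ hc₂]
  have hdet₂ : c₁ * (2 * β₀ * (c₁ * ρ) * γ₂.re + c₁) < 0 := by
    nlinarith [mul_pos (hc₂.trans hc) (hc₂.trans hc)]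
  obtain ⟨l₁, hl₁, hle₁⟩ := exists_pos_mul_le_sq_norm_add_re_conj_mul hβ hdet₁
  obtain ⟨l₂, hl₂, hle₂⟩ := exists_pos_mul_le_sq_norm_add_re_conj_mul hβ hdet₂
  refine ⟨min l₁ l₂ / 2, by positivity, fun r hr => ?_⟩
  obtain ⟨i, hi⟩ := Function.ne_iff.mp hr
  have hr_pos : 0 < ∑ i, ‖r i‖ ^ 2 :=
    Finset.sum_pos' (fun _ _ => by positivity)
      ⟨i, Finset.mem_univ i, pow_pos (norm_pos_iff.2 hi) 2⟩
  have hmin_pos : 0 < min l₁ l₂ * ∑ i, ‖r i‖ ^ 2 := mul_pos (lt_min hl₁ hl₂) hr_pos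
  have h₀₂ := (mul_le_mul_of_nonneg_right (min_le_left l₁ l₂) (by positivity)).trans
    (hle₁ (r 0) (r 2))
  have h₁₃ := (mul_le_mul_of_nonneg_right (min_le_right l₁ l₂) (by positivity)).trans
    (hle₂ (r 1) (r 3))
  subst hB hS
  push_cast at h₀₂ h₁₃
  rw [sum_sq_norm_mulVec_boundary, re_star_dotProduct_mulVec_S₂']
  rw [Fin.sum_univ_four] at hmin_pos ⊢
  linarith
end

section
/- Let c₁ > c₂ > 0 and c ∈ ℂ with c ≠ 0, and define b₁ = √(1 - c²/c₁²), b₂ = √(1 - c²/c₂²) using the principal square root, assuming b₂ ≠ 0. Then the vectors ŵ₁' = (-2i c₂ b₁, c₂²(1 + b₂²)/c₁, c, b₁ c i) and ŵ₂' = (-c₂ i (1/b₂ + b₂), 2c₂²/c₁, c, c i / b₂) in ℂ⁴ are linearly independent. -/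
open Complex

/-!
The third coordinates of the two vectors agree and are nonzero, so a vanishing combination
`s • ŵ₁' + t • ŵ₂'` has `t = -s`. The second coordinates then differ by
`c₂² (b₂² - 1) / c₁ = -c² / c₁ ≠ 0`, because `b₂² = 1 - c² / c₂²`; hence `s = 0`.
-/

theorem LinearIndependent.pair_of_apply_eq_of_apply_ne {K ι : Type*} [Field K] {v w : ι → K}
    {i j : ι} (hi : v i = w i) (hi₀ : v i ≠ 0) (hj : v j ≠ w j) :
    LinearIndependent K ![v, w] := by
  rw [LinearIndependent.pair_iff]
  intro s t hst
  have hsum : (s + t) * v i = 0 := by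
    have := congrFun hst i
    simp only [Pi.add_apply, Pi.smul_apply, smul_eq_mul, Pi.zero_apply] at this
    linear_combination this + t * hi
  obtain rfl : t = -s := by
    linear_combination (mul_eq_zero.mp hsum).resolve_right hi₀
  have hdiff : s * (v j - w j) = 0 := by
    have := congrFun hst j
    simp only [Pi.add_apply, Pi.smul_apply, smul_eq_mul, Pi.zero_apply] at this
    linear_combination this
  have hs : s = 0 := (mul_eq_zero.mp hdiff).resolve_right (sub_ne_zero.mpr hj)
  exact ⟨hs, by rw [hs, neg_zero]⟩

theorem Complex.cpow_one_div_two_sq (z : ℂ) : (z ^ ((1 : ℂ) / 2)) ^ 2 = z := by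
  rw [one_div]
  exact cpow_ofNat_inv_pow z 2

theorem stmt_7_general (c₁ c₂ : ℝ) (hc : c₁ > c₂) (hc₂ : c₂ > 0)
    (c : ℂ) (hcne : c ≠ 0)
    (b₁ b₂ : ℂ)
    (hb₂ : b₂ = (1 - c ^ 2 / (c₂ : ℂ) ^ 2) ^ ((1 : ℂ) / 2)) :
    LinearIndependent ℂ
      ![(![-2 * I * c₂ * b₁, (c₂ : ℂ) ^ 2 * (1 + b₂ ^ 2) / c₁, c, b₁ * c * I] :
          Fin 4 → ℂ),
        ![-c₂ * I * (1 / b₂ + b₂), 2 * (c₂ : ℂ) ^ 2 / c₁, c, c * I / b₂]] := by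
  have hc₁ : (c₁ : ℂ) ≠ 0 := ofReal_ne_zero.mpr (hc₂.trans hc).ne'
  have hc₂' : (c₂ : ℂ) ≠ 0 := ofReal_ne_zero.mpr hc₂.ne'
  have hb₂sq : b₂ ^ 2 = 1 - c ^ 2 / (c₂ : ℂ) ^ 2 := hb₂ ▸ cpow_one_div_two_sq _
  refine LinearIndependent.pair_of_apply_eq_of_apply_ne (i := 2) (j := 1) rfl hcne ?_
  change (c₂ : ℂ) ^ 2 * (1 + b₂ ^ 2) / c₁ ≠ 2 * (c₂ : ℂ) ^ 2 / c₁
  have hgap : (c₂ : ℂ) ^ 2 * (1 + b₂ ^ 2) / c₁ - 2 * (c₂ : ℂ) ^ 2 / c₁ = -c ^ 2 / c₁ := by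
    rw [hb₂sq]
    field_simp
    ring
  rw [← sub_ne_zero, hgap]
  exact div_ne_zero (neg_ne_zero.mpr (pow_ne_zero 2 hcne)) hc₁

theorem stmt_7 (c₁ c₂ : ℝ) (hc : c₁ > c₂) (hc₂ : c₂ > 0)
    (c : ℂ) (hcne : c ≠ 0)
    (b₁ b₂ : ℂ)
    (hb₁ : b₁ = (1 - c ^ 2 / (c₁ : ℂ) ^ 2) ^ ((1 : ℂ) / 2))
    (hb₂ : b₂ = (1 - c ^ 2 / (c₂ : ℂ) ^ 2) ^ ((1 : ℂ) / 2))
    (hb₂ne : b₂ ≠ 0) :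
    LinearIndependent ℂ
      ![(![-2 * I * c₂ * b₁, (c₂ : ℂ) ^ 2 * (1 + b₂ ^ 2) / c₁, c, b₁ * c * I] :
          Fin 4 → ℂ),
        ![-c₂ * I * (1 / b₂ + b₂), 2 * (c₂ : ℂ) ^ 2 / c₁, c, c * I / b₂]] :=
  stmt_7_general c₁ c₂ hc hc₂ c hcne b₁ b₂ hb₂
end

section
/- Let c₁ > c₂ > 0 and let c be a real number with 0 < |c| < c₂, so that b₁ = √(1 - c²/c₁²) and b₂ = √(1 - c²/c₂²) are positive reals. Let S₂' be the real symmetric 4×4 matrix with S₂'[1,3] = S₂'[3,1] = c₂, S₂'[2,4] = S₂'[4,2] = c₁ and zeros elsewhere, and let ŵ₁', ŵ₂' ∈ ℂ⁴ be the mode vectors ŵ₁' = (-2i c₂ b₁, c₂²(1+b₂²)/c₁, c, b₁ c i) and ŵ₂' = (-c₂ i (1/b₂ + b₂), 2c₂²/c₁, c, c i / b₂). Then r* S₂' r = 0 for every r in the span of {ŵ₁', ŵ₂'}. -/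
/-!
The form `r ↦ r* S r` pairs the first coordinate with the third and the second with the fourth.
Both mode vectors are imaginary in the first and fourth coordinates and real in the other two, and
on such vectors the sesquilinear form `x* S y` is `i` times a real antisymmetric pairing. Hence it
vanishes on the diagonal automatically, and off the diagonal the pairing of the two modes cancels
identically in `b₁` and `b₂`. A sesquilinear form vanishing on all pairs of a spanning set
vanishes on the span.
-/

open Matrix Complex

section Isotropic

variable {R n : Type*} [CommRing R] [StarRing R] [Fintype n]

theorem star_dotProduct_mulVec_eq_zero_of_mem_span (A : Matrix n n R) {s : Set (n → R)}
    (h : ∀ x ∈ s, ∀ y ∈ s, star x ⬝ᵥ A *ᵥ y = 0) :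
    ∀ x ∈ Submodule.span R s, ∀ y ∈ Submodule.span R s, star x ⬝ᵥ A *ᵥ y = 0 := by
  have h_left : ∀ x ∈ s, ∀ y ∈ Submodule.span R s, star x ⬝ᵥ A *ᵥ y = 0 := by
    intro x hx y hy
    induction hy using Submodule.span_induction with
    | mem y hy => exact h x hx y hy
    | zero => simp
    | add y z _ _ hy hz => rw [mulVec_add, dotProduct_add, hy, hz, add_zero]
    | smul a y _ hy => rw [mulVec_smul, dotProduct_smul, hy, smul_zero]
  intro x hx
  induction hx using Submodule.span_induction with
  | mem x hx => exact h_left x hx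
  | zero => simp
  | add x z _ _ hx hz => intro y hy; rw [star_add, add_dotProduct, hx y hy, hz y hy, add_zero]
  | smul a x _ hx => intro y hy; rw [star_smul, smul_dotProduct, hx y hy, smul_zero]

end Isotropic

def pairingMatrix (a b : ℝ) : Matrix (Fin 4) (Fin 4) ℂ :=
  !![0, 0, (a : ℂ), 0; 0, 0, 0, (b : ℂ); (a : ℂ), 0, 0, 0; 0, (b : ℂ), 0, 0]

def twistedOfReal (v : Fin 4 → ℝ) : Fin 4 → ℂ :=
  ![v 0 * I, v 1, v 2, v 3 * I]

def symplecticPairing (a b : ℝ) (u v : Fin 4 → ℝ) : ℝ :=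
  a * (u 2 * v 0 - u 0 * v 2) + b * (u 1 * v 3 - u 3 * v 1)

theorem symplecticPairing_self (a b : ℝ) (u : Fin 4 → ℝ) : symplecticPairing a b u u = 0 := by
  unfold symplecticPairing; ring

theorem symplecticPairing_swap (a b : ℝ) (u v : Fin 4 → ℝ) :
    symplecticPairing a b v u = -symplecticPairing a b u v := by
  unfold symplecticPairing; ring

theorem star_twistedOfReal_dotProduct_pairingMatrix_mulVec (a b : ℝ) (u v : Fin 4 → ℝ) :
    star (twistedOfReal u) ⬝ᵥ pairingMatrix a b *ᵥ twistedOfReal v =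
      I * symplecticPairing a b u v := by
  simp only [twistedOfReal, pairingMatrix, symplecticPairing, dotProduct, mulVec,
    Fin.sum_univ_four, Pi.star_apply, of_apply, cons_val', cons_val, empty_val', cons_val_fin_one,
    Complex.star_def, _root_.map_mul, conj_ofReal, conj_I]
  push_cast
  ring

theorem symplecticPairing_modes {c₁ : ℝ} (hc₁ : c₁ ≠ 0) (c₂ c b₁ b₂ : ℝ) :
    symplecticPairing c₂ c₁ ![-2 * c₂ * b₁, c₂ ^ 2 * (1 + b₂ ^ 2) / c₁, c, b₁ * c]
      ![-c₂ * (1 / b₂ + b₂), 2 * c₂ ^ 2 / c₁, c, c / b₂] = 0 := by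
  simp only [symplecticPairing, cons_val]
  field_simp
  ring

theorem stmt_8_general (c₁ c₂ c : ℝ) (hc : c₁ > c₂) (hc₂ : c₂ > 0)
    (b₁ b₂ : ℝ)
    (S₂' : Matrix (Fin 4) (Fin 4) ℂ)
    (hS : S₂' = !![0, 0, (c₂ : ℂ), 0; 0, 0, 0, (c₁ : ℂ);
                   (c₂ : ℂ), 0, 0, 0; 0, (c₁ : ℂ), 0, 0])
    (w₁ w₂ : Fin 4 → ℂ)
    (hw₁ : w₁ = ![-2 * I * c₂ * b₁, (c₂ : ℂ) ^ 2 * (1 + (b₂ : ℂ) ^ 2) / c₁,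
      (c : ℂ), (b₁ : ℂ) * c * I])
    (hw₂ : w₂ = ![-c₂ * I * (1 / b₂ + b₂), 2 * (c₂ : ℂ) ^ 2 / c₁,
      (c : ℂ), (c : ℂ) * I / b₂]) :
    ∀ r ∈ Submodule.span ℂ ({w₁, w₂} : Set (Fin 4 → ℂ)),
      star r ⬝ᵥ S₂'.mulVec r = 0 := by
  have hw₁' : w₁ = twistedOfReal ![-2 * c₂ * b₁, c₂ ^ 2 * (1 + b₂ ^ 2) / c₁, c, b₁ * c] := by
    rw [hw₁]; ext i; fin_cases i <;> simp only [twistedOfReal] <;> push_cast <;> ring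
  have hw₂' : w₂ = twistedOfReal ![-c₂ * (1 / b₂ + b₂), 2 * c₂ ^ 2 / c₁, c, c / b₂] := by
    rw [hw₂]; ext i; fin_cases i <;> simp only [twistedOfReal] <;> push_cast <;> ring
  have hω := symplecticPairing_modes (hc₂.trans hc).ne' c₂ c b₁ b₂
  have hS' : S₂' = pairingMatrix c₂ c₁ := hS
  rw [hS', hw₁', hw₂']
  intro r hr
  refine star_dotProduct_mulVec_eq_zero_of_mem_span _ ?_ r hr r hr
  rintro x (rfl | rfl) y (rfl | rfl) <;>
    rw [star_twistedOfReal_dotProduct_pairingMatrix_mulVec]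
  · rw [symplecticPairing_self, ofReal_zero, mul_zero]
  · rw [hω, ofReal_zero, mul_zero]
  · rw [symplecticPairing_swap, hω, neg_zero, ofReal_zero, mul_zero]
  · rw [symplecticPairing_self, ofReal_zero, mul_zero]

theorem stmt_8 (c₁ c₂ c : ℝ) (hc : c₁ > c₂) (hc₂ : c₂ > 0)
    (hcne : c ≠ 0) (hsub : |c| < c₂)
    (b₁ b₂ : ℝ)
    (hb₁ : b₁ = Real.sqrt (1 - c ^ 2 / c₁ ^ 2))
    (hb₂ : b₂ = Real.sqrt (1 - c ^ 2 / c₂ ^ 2))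
    (S₂' : Matrix (Fin 4) (Fin 4) ℂ)
    (hS : S₂' = !![0, 0, (c₂ : ℂ), 0; 0, 0, 0, (c₁ : ℂ);
                   (c₂ : ℂ), 0, 0, 0; 0, (c₁ : ℂ), 0, 0])
    (w₁ w₂ : Fin 4 → ℂ)
    (hw₁ : w₁ = ![-2 * I * c₂ * b₁, (c₂ : ℂ) ^ 2 * (1 + (b₂ : ℂ) ^ 2) / c₁,
      (c : ℂ), (b₁ : ℂ) * c * I])
    (hw₂ : w₂ = ![-c₂ * I * (1 / b₂ + b₂), 2 * (c₂ : ℂ) ^ 2 / c₁,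
      (c : ℂ), (c : ℂ) * I / b₂]) :
    ∀ r ∈ Submodule.span ℂ ({w₁, w₂} : Set (Fin 4 → ℂ)),
      star r ⬝ᵥ S₂'.mulVec r = 0 :=
  stmt_8_general c₁ c₂ c hc hc₂ b₁ b₂ S₂' hS w₁ w₂ hw₁ hw₂
end

section
/- Let ρ > 0, μ > 0, λ + μ > 0, c₁ = √((λ+2μ)/ρ), c₂ = √(μ/ρ), and let A₂ and C be the 5×5 real matrices of the velocity–stress formulation and the symmetrizing change of variables, respectively: A₂ has nonzero entries A₂[1,4] = 1/ρ, A₂[2,5] = 1/ρ, A₂[3,2] = λ, A₂[4,1] = μ, A₂[5,2] = λ+2μ; C has nonzero entries C[1,4] = 1/c₁, C[2,5] = 1/c₁, C[3,1] = 2ρc₂√(c₁²-c₂²)/c₁², C[3,3] = ρ(1-2c₂²/c₁²), C[4,2] = c₂ρ/c₁, C[5,3] = ρ. Then C⁻¹ A₂ C equals the symmetric matrix S₂ with nonzero entries S₂[2,4] = S₂[4,2] = c₂ and S₂[3,5] = S₂[5,3] = c₁; in particular C⁻¹ A₂ C is symmetric. -/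
/-!
Writing the Lamé constants through the wave speeds, `ρ c₁² = λ + 2μ` and `ρ c₂² = μ`, the
symmetrizer intertwines the two matrices, `A₂ C = C S₂`. Its determinant
`2 ρ³ c₂² √(c₁² - c₂²) / c₁⁵` is nonzero because `c₁ > c₂ > 0` (this is where `λ + μ > 0` enters),
so `C⁻¹ A₂ C = S₂`, which is visibly symmetric.
-/

open Matrix

theorem Matrix.inv_mul_mul_eq_of_mul_eq_mul {n R : Type*} [Fintype n] [DecidableEq n] [CommRing R]
    {A C S : Matrix n n R} (hC : IsUnit C.det) (h : A * C = C * S) : C⁻¹ * A * C = S := by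
  rw [mul_assoc, h, ← mul_assoc, nonsing_inv_mul C hC, one_mul]

namespace ElasticWave

noncomputable section

def velocityStressA₂ (ρ lam μ : ℝ) : Matrix (Fin 5) (Fin 5) ℝ :=
  !![0, 0, 0, 1 / ρ, 0;
     0, 0, 0, 0, 1 / ρ;
     0, lam, 0, 0, 0;
     μ, 0, 0, 0, 0;
     0, lam + 2 * μ, 0, 0, 0]

def symmetrizer (ρ c₁ c₂ : ℝ) : Matrix (Fin 5) (Fin 5) ℝ :=
  !![0, 0, 0, 1 / c₁, 0;
     0, 0, 0, 0, 1 / c₁;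
     2 * ρ * c₂ * Real.sqrt (c₁ ^ 2 - c₂ ^ 2) / c₁ ^ 2, 0, ρ * (1 - 2 * c₂ ^ 2 / c₁ ^ 2), 0, 0;
     0, c₂ * ρ / c₁, 0, 0, 0;
     0, 0, ρ, 0, 0]

def symmetrizedA₂ (c₁ c₂ : ℝ) : Matrix (Fin 5) (Fin 5) ℝ :=
  !![0, 0, 0, 0, 0;
     0, 0, 0, c₂, 0;
     0, 0, 0, 0, c₁;
     0, c₂, 0, 0, 0;
     0, 0, c₁, 0, 0]

theorem symmetrizedA₂_isSymm (c₁ c₂ : ℝ) : (symmetrizedA₂ c₁ c₂).IsSymm :=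
  Matrix.IsSymm.ext fun i j => by fin_cases i <;> fin_cases j <;> rfl

theorem det_symmetrizer (ρ c₁ c₂ : ℝ) :
    (symmetrizer ρ c₁ c₂).det = 2 * ρ ^ 3 * c₂ ^ 2 * Real.sqrt (c₁ ^ 2 - c₂ ^ 2) / c₁ ^ 5 := by
  simp [symmetrizer, det_succ_row_zero, Fin.sum_univ_succ, Fin.succAbove]
  ring

theorem velocityStressA₂_mul_symmetrizer {ρ lam μ c₁ c₂ : ℝ} (hρ : ρ ≠ 0) (hc₁ : c₁ ≠ 0)
    (hc₁_sq : ρ * c₁ ^ 2 = lam + 2 * μ) (hc₂_sq : ρ * c₂ ^ 2 = μ) :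
    velocityStressA₂ ρ lam μ * symmetrizer ρ c₁ c₂ = symmetrizer ρ c₁ c₂ * symmetrizedA₂ c₁ c₂ := by
  have hlam : lam = ρ * c₁ ^ 2 - 2 * μ := by linarith
  rw [velocityStressA₂, ← hc₁_sq, hlam, ← hc₂_sq]
  ext i j
  fin_cases i <;> fin_cases j <;>
    simp [symmetrizer, symmetrizedA₂, mul_apply, Fin.sum_univ_five] <;>
    field_simp

end

end ElasticWave

open ElasticWave in
theorem stmt_15 (ρ lam μ : ℝ) (hρ : ρ > 0) (hμ : μ > 0) (hlm : lam + μ > 0)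
    (c₁ c₂ : ℝ) (hc₁ : c₁ = Real.sqrt ((lam + 2 * μ) / ρ))
    (hc₂ : c₂ = Real.sqrt (μ / ρ))
    (A₂ C S₂ : Matrix (Fin 5) (Fin 5) ℝ)
    (hA₂ : A₂ = !![0, 0, 0, 1 / ρ, 0;
                   0, 0, 0, 0, 1 / ρ;
                   0, lam, 0, 0, 0;
                   μ, 0, 0, 0, 0;
                   0, lam + 2 * μ, 0, 0, 0])
    (hC : C = !![0, 0, 0, 1 / c₁, 0;
                 0, 0, 0, 0, 1 / c₁;
                 2 * ρ * c₂ * Real.sqrt (c₁ ^ 2 - c₂ ^ 2) / c₁ ^ 2, 0,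
                   ρ * (1 - 2 * c₂ ^ 2 / c₁ ^ 2), 0, 0;
                 0, c₂ * ρ / c₁, 0, 0, 0;
                 0, 0, ρ, 0, 0])
    (hS₂ : S₂ = !![0, 0, 0, 0, 0;
                   0, 0, 0, c₂, 0;
                   0, 0, 0, 0, c₁;
                   0, c₂, 0, 0, 0;
                   0, 0, c₁, 0, 0]) :
    C⁻¹ * A₂ * C = S₂ ∧ (C⁻¹ * A₂ * C).IsSymm := by
  have hP : 0 < (lam + 2 * μ) / ρ := div_pos (by linarith) hρ
  have hc₁_pos : 0 < c₁ := hc₁ ▸ Real.sqrt_pos.2 hP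
  have hc₂_pos : 0 < c₂ := hc₂ ▸ Real.sqrt_pos.2 (div_pos hμ hρ)
  have hc₁_sq : ρ * c₁ ^ 2 = lam + 2 * μ := by rw [hc₁, Real.sq_sqrt hP.le]; field_simp
  have hc₂_sq : ρ * c₂ ^ 2 = μ := by rw [hc₂, Real.sq_sqrt (div_pos hμ hρ).le]; field_simp
  have hgap : 0 < Real.sqrt (c₁ ^ 2 - c₂ ^ 2) := Real.sqrt_pos.2 (by nlinarith)
  have hdet : IsUnit C.det := by
    rw [hC, isUnit_iff_ne_zero]
    exact (det_symmetrizer ρ c₁ c₂).trans_ne (by positivity)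
  have hconj : C⁻¹ * A₂ * C = S₂ := by
    refine inv_mul_mul_eq_of_mul_eq_mul hdet ?_
    rw [hA₂, hC, hS₂]
    exact velocityStressA₂_mul_symmetrizer hρ.ne' hc₁_pos.ne' hc₁_sq hc₂_sq
  exact ⟨hconj, hconj ▸ hS₂ ▸ symmetrizedA₂_isSymm c₁ c₂⟩
end

section
/- Let α₀ ∈ ℂ, c ∈ ℂ, c₁ > c₂ > 0, and b₁ = √(1-c²/c₁²), b₂ = √(1-c²/c₂²) with b₂ ≠ 0. If the mode vectors ŵ₁' = (-2i c₂ b₁, c₂²(1+b₂²)/c₁, c, b₁ c i) and ŵ₂' = (-c₂ i(1/b₂ + b₂), 2c₂²/c₁, c, c i/b₂) satisfy ŵ₁' = α₀ ŵ₂' for some nonzero scalar α₀, then necessarily α₀ = b₁ b₂ and c = 0. -/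
open Complex

/-! The third components give `c = α₀ c` and the second ones `1 + b₂² = 2 α₀`. If `c ≠ 0`, then
`α₀ = 1`, hence `b₂² = 1`, i.e. `c² / c₂² = 0`, which is absurd. So `c = 0`, and then
`b₁ = b₂ = 1` and `α₀ = 1`. -/

lemma eq_zero_of_one_add_sq_eq_two_mul {K : Type*} [Field K] {α b c d : K} (hd : d ≠ 0)
    (hb : b ^ 2 = 1 - c ^ 2 / d ^ 2) (hbα : 1 + b ^ 2 = 2 * α) (hcα : c = α * c) : c = 0 := by
  by_contra hc
  have hα : α = 1 := (mul_eq_right₀ hc).mp hcα.symm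
  have hcd : c ^ 2 / d ^ 2 = 0 := by linear_combination hb - hbα - 2 * hα
  exact hc (by simpa [hd] using hcd)

theorem stmt_17_general (c₁ c₂ : ℝ) (hc : c₁ > c₂) (hc₂ : c₂ > 0)
    (c : ℂ) (α₀ : ℂ)
    (b₁ b₂ : ℂ)
    (hb₁ : b₁ = (1 - c ^ 2 / (c₁ : ℂ) ^ 2) ^ ((1 : ℂ) / 2))
    (hb₂ : b₂ = (1 - c ^ 2 / (c₂ : ℂ) ^ 2) ^ ((1 : ℂ) / 2))
    (heq : (![-2 * I * c₂ * b₁, (c₂ : ℂ) ^ 2 * (1 + b₂ ^ 2) / c₁, c, b₁ * c * I] :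
        Fin 4 → ℂ) =
      α₀ • ![-c₂ * I * (1 / b₂ + b₂), 2 * (c₂ : ℂ) ^ 2 / c₁, c, c * I / b₂]) :
    α₀ = b₁ * b₂ ∧ c = 0 := by
  have hc₁ : (c₁ : ℂ) ≠ 0 := ofReal_ne_zero.mpr (hc₂.trans hc).ne'
  have hc₂ : (c₂ : ℂ) ≠ 0 := ofReal_ne_zero.mpr hc₂.ne'
  have hb₂sq : b₂ ^ 2 = 1 - c ^ 2 / (c₂ : ℂ) ^ 2 := by
    rw [hb₂, one_div, cpow_ofNat_inv_pow]
  have hcα : c = α₀ * c := by simpa using congr_fun heq 2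
  have hbα : 1 + b₂ ^ 2 = 2 * α₀ := by
    have h := congr_fun heq 1
    simp only [Matrix.cons_val_one, Matrix.cons_val_zero, Pi.smul_apply, smul_eq_mul] at h
    field_simp at h
    linear_combination h
  obtain rfl : c = 0 := eq_zero_of_one_add_sq_eq_two_mul hc₂ hb₂sq hbα hcα
  have hb₁ : b₁ = 1 := by simp [hb₁]
  have hb₂ : b₂ = 1 := by simp [hb₂]
  subst hb₁ hb₂
  exact ⟨by linear_combination -hbα / 2, rfl⟩

theorem stmt_17 (c₁ c₂ : ℝ) (hc : c₁ > c₂) (hc₂ : c₂ > 0)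
    (c : ℂ) (α₀ : ℂ) (hα₀ : α₀ ≠ 0)
    (b₁ b₂ : ℂ)
    (hb₁ : b₁ = (1 - c ^ 2 / (c₁ : ℂ) ^ 2) ^ ((1 : ℂ) / 2))
    (hb₂ : b₂ = (1 - c ^ 2 / (c₂ : ℂ) ^ 2) ^ ((1 : ℂ) / 2))
    (hb₂ne : b₂ ≠ 0)
    (heq : (![-2 * I * c₂ * b₁, (c₂ : ℂ) ^ 2 * (1 + b₂ ^ 2) / c₁, c, b₁ * c * I] :
        Fin 4 → ℂ) =
      α₀ • ![-c₂ * I * (1 / b₂ + b₂), 2 * (c₂ : ℂ) ^ 2 / c₁, c, c * I / b₂]) :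
    α₀ = b₁ * b₂ ∧ c = 0 :=
  stmt_17_general c₁ c₂ hc hc₂ c α₀ b₁ b₂ hb₁ hb₂ heq
end
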